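/- For every n ≥ 1, the major index and the inversion number are equidistributed on the symmetric group S_n; that is, ∑_{σ∈S_n} q^{maj σ} = ∑_{σ∈S_n} q^{inv σ}. -/

import Mathlib

/-- Descent set (ligne of route) of a word, with 1-based positions. -/
def ligne (w : List ℕ) : Finset ℕ :=
  (Finset.Icc 1 (w.length - 1)).filter (fun i => w.getD (i-1) 0 > w.getD i 0)

/-- Major index of a word. -/
def maj (w : List ℕ) : ℕ := ∑ i ∈ ligne w, i

/-- Inversion number of a word. -/
def inv (w : List ℕ) : ℕ :=
  ((Finset.range w.length ×ˢ Finset.range w.length).filter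
    (fun p => p.1 < p.2 ∧ w.getD p.1 0 > w.getD p.2 0)).card

/-- `w` is (the one-line word of) a permutation of `1,…,n`. -/
def IsPermWord (n : ℕ) (w : List ℕ) : Prop := w.Perm (List.range' 1 n)

/-- One-line word of `σ ∈ S_n` with values in `1,…,n`. -/
def toWord {n : ℕ} (σ : Equiv.Perm (Fin n)) : List ℕ := List.ofFn (fun i => (σ i : ℕ) + 1)

/-- Subexcedent word: `0 ≤ d_i ≤ i-1` (1-based), i.e. `d_i ≤ i` for 0-based `i`. -/
def Subexcedent (w : List ℕ) : Prop := ∀ i < w.length, w.getD i 0 ≤ i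

/-- Subdiagonal word: `0 ≤ d_i ≤ n-i` (1-based). -/
def Subdiagonal (w : List ℕ) : Prop := ∀ i < w.length, w.getD i 0 + i + 1 ≤ w.length

/-- Lehmer code: `d_i = #{j < i : x_j > x_i}`. -/
def invcode (w : List ℕ) : List ℕ :=
  (List.range w.length).map (fun i => ((Finset.range i).filter (fun j => w.getD j 0 > w.getD i 0)).card)

/-- `Lc`-code: `d_i = #{j > i : x_i > x_j}`. -/
def lc (w : List ℕ) : List ℕ :=
  (List.range w.length).map (fun i => ((Finset.Ico (i+1) w.length).filter (fun j => w.getD i 0 > w.getD j 0)).card)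

/-- Major index code: `d_i = maj(σ|_i) - maj(σ|_{i-1})`, where `σ|_i` erases letters `> i`. -/
def majcode (w : List ℕ) : List ℕ :=
  (List.range w.length).map (fun i => maj (w.filter (· ≤ i+1)) - maj (w.filter (· ≤ i)))

/-- `Mc`-code: `d_i = maj(σ^{(i)}) - maj(σ^{(i+1)})`, where `σ^{(i)}` erases letters `< i`. -/
def mc (w : List ℕ) : List ℕ :=
  (List.range w.length).map (fun i => maj (w.filter (fun x => i+1 ≤ x)) - maj (w.filter (fun x => i+2 ≤ x)))

/-- One-line word of the inverse permutation. -/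
def invWord (w : List ℕ) : List ℕ :=
  (List.range w.length).map (fun i => w.idxOf (i+1) + 1)

/-- `Ic σ = Lc (σ⁻¹)`. -/
def ic (w : List ℕ) : List ℕ := lc (invWord w)

/-- Inverse ligne of route. -/
def iligne (w : List ℕ) : Finset ℕ := ligne (invWord w)

/-- Complement map `δ` on codes: `δ(d₁⋯d_n) = (0-d₁)(1-d₂)⋯(n-1-d_n)`. -/
def deltaC (w : List ℕ) : List ℕ :=
  (List.range w.length).map (fun i => i - w.getD i 0)

/-- Nondecreasing rearrangement of a word. -/
def sortW (w : List ℕ) : List ℕ := List.insertionSort (· ≤ ·) w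

/-- Set-valued statistic `El = Ligne ∘ Mc⁻¹` on subdiagonal words. -/
noncomputable def El (d : List ℕ) : Finset ℕ := by
  classical
  exact if h : ∃ w, IsPermWord d.length w ∧ mc w = d then ligne h.choose else ∅

/-- Set-valued statistic `Eul = Ligne ∘ Majcode⁻¹` on subexcedent words. -/
noncomputable def Eul (d : List ℕ) : Finset ℕ := by
  classical
  exact if h : ∃ w, IsPermWord d.length w ∧ majcode w = d then ligne h.choose else ∅

/-!
Insert the largest letter `n + 1` into a permutation word of length `n`, in each of its `n + 1`
slots. Inserting it at slot `j` raises `inv` by the number `n - j` of letters to its right. It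
raises `maj` by an amount which, as `j` runs over the slots, takes each value `0, …, n` exactly
once: the last slot gives `0`, the `d` descent slots read from right to left give `1, …, d`, and
the other slots read from left to right give `d + 1, …, n`. Hence both generating functions
satisfy the same recursion and equal `[1]_q [2]_q ⋯ [n]_q`.
-/

open Finset

lemma List.getD_insertIdx {w : List ℕ} {j : ℕ} (v k : ℕ) (hj : j ≤ w.length) :
    (w.insertIdx j v).getD k 0 =
      if k < j then w.getD k 0 else if k = j then v else w.getD (k - 1) 0 := by
  simp only [List.getD_eq_getElem?_getD, List.getElem?_insertIdx]
  split_ifs <;> first | rfl | omega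

lemma mem_ligne {w : List ℕ} {i : ℕ} :
    i ∈ ligne w ↔ 1 ≤ i ∧ i < w.length ∧ w.getD i 0 < w.getD (i - 1) 0 := by
  simp only [ligne, mem_filter, mem_Icc]
  omega

lemma ligne_insertIdx {w : List ℕ} {v j : ℕ} (hj : j ≤ w.length) (hv : ∀ x ∈ w, x < v) :
    ligne (w.insertIdx j v) =
      {i ∈ ligne w | i < j} ∪ {i ∈ ligne w | j < i}.image (· + 1) ∪
        if j < w.length then {j + 1} else ∅ := by
  have hvD : ∀ k < w.length, w.getD k 0 < v := fun k hk => by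
    rw [List.getD_eq_getElem _ _ hk]
    exact hv _ (List.getElem_mem hk)
  ext i
  simp only [mem_union, mem_filter, mem_image, mem_ligne, List.length_insertIdx_of_le_length hj,
    List.getD_insertIdx _ _ hj]
  split_ifs <;> grind

/- Inserting a letter larger than all others at slot `j` shifts the descents after `j` by one,
destroys a descent at `j`, and creates the descent `j + 1` unless `j` is the last slot. -/
def majIncrement (w : List ℕ) (j : ℕ) : ℕ :=
  if j = w.length then 0 else 1 + #{i ∈ ligne w | j < i} + if j ∈ ligne w then 0 else j

lemma maj_eq_sum_lt_add_sum_gt (w : List ℕ) (j : ℕ) :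
    maj w = ∑ i ∈ ligne w with i < j, i + ∑ i ∈ ligne w with j < i, i +
      if j ∈ ligne w then j else 0 := by
  have hsplit : ∀ i, i = (if i < j then i else 0) + (if j < i then i else 0) +
      if j = i then i else 0 := fun i => by split_ifs <;> omega
  rw [maj, sum_congr rfl fun i _ => hsplit i, sum_add_distrib, sum_add_distrib, ← sum_filter,
    ← sum_filter, sum_ite_eq]

lemma maj_insertIdx {w : List ℕ} {v j : ℕ} (hj : j ≤ w.length) (hv : ∀ x ∈ w, x < v) :
    maj (w.insertIdx j v) = maj w + majIncrement w j := by
  have hdisj : Disjoint {i ∈ ligne w | i < j} ({i ∈ ligne w | j < i}.image (· + 1)) := by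
    simp only [disjoint_left, mem_filter, mem_image]
    omega
  have hdisj' : Disjoint ({i ∈ ligne w | i < j} ∪ {i ∈ ligne w | j < i}.image (· + 1))
      (if j < w.length then {j + 1} else ∅) := by
    split_ifs
    · simp only [disjoint_singleton_right, mem_union, mem_filter, mem_image]
      omega
    · exact disjoint_empty_right _
  rw [maj, ligne_insertIdx hj hv, sum_union hdisj', sum_union hdisj,
    sum_image fun _ _ _ _ => Nat.add_right_cancel, sum_add_distrib, sum_const, smul_eq_mul,
    mul_one, maj_eq_sum_lt_add_sum_gt w j, majIncrement]
  rcases hj.lt_or_eq with hj | rfl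
  · simp only [if_pos hj, if_neg hj.ne, sum_singleton]
    split_ifs <;> ring
  · have hlt : ∀ i ∈ ligne w, i < w.length := fun i hi => (mem_ligne.mp hi).2.1
    have hlen : w.length ∉ ligne w := fun h => lt_irrefl _ (hlt _ h)
    simp [filter_false_of_mem fun i hi => (hlt i hi).not_gt, hlen]

lemma card_filter_gt_lt_of_mem {s : Finset ℕ} {j j' : ℕ} (h : j < j') (hj' : j' ∈ s) :
    #{i ∈ s | j' < i} < #{i ∈ s | j < i} := by
  refine card_lt_card ⟨monotone_filter_right s fun _ _ => h.trans, fun hsub => ?_⟩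
  simpa using hsub (mem_filter.mpr ⟨hj', h⟩)

lemma card_filter_gt_add_lt_of_notMem {s : Finset ℕ} {j j' : ℕ} (h : j < j') (hj' : j' ∉ s) :
    #{i ∈ s | j < i} + j < #{i ∈ s | j' < i} + j' := by
  have hsub : {i ∈ s | j < i} ⊆ {i ∈ s | j' < i} ∪ Ioo j j' := by
    intro i hi
    simp only [mem_filter, mem_union, mem_Ioo] at hi ⊢
    rcases lt_trichotomy j' i with hi' | rfl | hi'
    exacts [.inl ⟨hi.1, hi'⟩, absurd hi.1 hj', .inr ⟨hi.2, hi'⟩]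
  have := (card_le_card hsub).trans (card_union_le _ _)
  rw [Nat.card_Ioo] at this
  omega

lemma majIncrement_lt {w : List ℕ} {j : ℕ} (hj : j ≤ w.length) :
    majIncrement w j < w.length + 1 := by
  have hsub : {i ∈ ligne w | j < i} ⊆ Ioo j w.length := fun i hi => by
    simp only [mem_filter, mem_ligne, mem_Ioo] at hi ⊢
    omega
  have := card_le_card hsub
  rw [Nat.card_Ioo] at this
  unfold majIncrement
  split_ifs with h₁ h₂
  · omega
  · have := (mem_ligne.mp h₂).1
    omega
  · omega

lemma majIncrement_injOn (w : List ℕ) : Set.InjOn (majIncrement w) (range (w.length + 1)) := by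
  have hne : ∀ j j', j < j' → j' ≤ w.length → majIncrement w j ≠ majIncrement w j' := by
    intro j j' h hj'
    unfold majIncrement
    rw [if_neg (by omega)]
    rcases hj'.lt_or_eq with hj' | rfl
    · rw [if_neg hj'.ne]
      by_cases hd : j' ∈ ligne w
      · have := card_filter_gt_lt_of_mem h hd
        split_ifs <;> omega
      · have := card_filter_gt_add_lt_of_notMem h hd
        split_ifs <;> omega
    · simp
  intro a ha b hb hab
  simp only [coe_range, Set.mem_Iio] at ha hb
  rcases lt_trichotomy a b with h | h | h
  exacts [absurd hab (hne a b h (by omega)), h, absurd hab.symm (hne b a h (by omega))]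

lemma sum_comp_majIncrement {M : Type*} [AddCommMonoid M] (w : List ℕ) (f : ℕ → M) :
    ∑ j ∈ range (w.length + 1), f (majIncrement w j) = ∑ j ∈ range (w.length + 1), f j := by
  have hmaps : Set.MapsTo (majIncrement w) (range (w.length + 1)) (range (w.length + 1)) :=
    fun j hj => by simpa using majIncrement_lt (Nat.lt_succ_iff.mp (by simpa using hj))
  exact sum_nbij _ hmaps (majIncrement_injOn w)
    (surjOn_of_injOn_of_card_le _ hmaps (majIncrement_injOn w) le_rfl) fun _ _ => rfl

lemma List.countP_eq_sum_range (p : ℕ → Bool) (w : List ℕ) :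
    w.countP p = ∑ k ∈ Finset.range w.length, if p (w.getD k 0) then 1 else 0 := by
  induction w with
  | nil => rfl
  | cons a w ih => rw [List.countP_cons, ih, List.length_cons, Finset.sum_range_succ']; rfl

lemma inv_cons (a : ℕ) (w : List ℕ) : inv (a :: w) = w.countP (· < a) + inv w := by
  rw [inv, inv, card_filter, card_filter, sum_product, sum_product, List.length_cons,
    sum_range_succ', List.countP_eq_sum_range]
  simp only [sum_range_succ', List.getD_cons_succ, List.getD_cons_zero]
  simp [add_comm]

lemma inv_insertIdx {w : List ℕ} {v j : ℕ} (hj : j ≤ w.length) (hv : ∀ x ∈ w, x < v) :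
    inv (w.insertIdx j v) = inv w + (w.length - j) := by
  induction w generalizing j with
  | nil =>
    obtain rfl : j = 0 := by simpa using hj
    rfl
  | cons a w ih =>
    rcases j with _ | j
    · rw [List.insertIdx_zero, inv_cons, List.countP_eq_length.mpr (by simpa using hv), add_comm]
      rfl
    · have hav : a < v := hv a List.mem_cons_self
      rw [List.insertIdx_succ_cons, inv_cons, inv_cons,
        ih (by simpa using hj) fun x hx => hv x (List.mem_cons_of_mem a hx),
        (List.perm_insertIdx v w (by simpa using hj)).countP_eq, List.countP_cons]
      simp only [List.length_cons, decide_eq_true_eq, hav.not_gt, if_false]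
      omega

def permWords (n : ℕ) : Finset (List ℕ) := (List.range' 1 n).permutations.toFinset

lemma mem_permWords {n : ℕ} {w : List ℕ} : w ∈ permWords n ↔ IsPermWord n w := by
  simp [permWords, IsPermWord, List.mem_permutations]

lemma card_permWords_le (n : ℕ) : #(permWords n) ≤ n.factorial := by
  refine (List.toFinset_card_le _).trans_eq ?_
  rw [List.length_permutations, List.length_range']

namespace IsPermWord

variable {n : ℕ} {w : List ℕ}

lemma length_eq (h : IsPermWord n w) : w.length = n := by
  simpa using List.Perm.length_eq h

lemma mem_iff (h : IsPermWord n w) {x : ℕ} : x ∈ w ↔ 1 ≤ x ∧ x < n + 1 := by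
  rw [List.Perm.mem_iff h, List.mem_range'_1]
  omega

lemma insertIdx (h : IsPermWord n w) {j : ℕ} (hj : j ≤ n) :
    IsPermWord (n + 1) (w.insertIdx j (n + 1)) := by
  refine (List.perm_insertIdx _ _ (h.length_eq ▸ hj)).trans ?_
  rw [List.range'_1_concat, add_comm 1 n]
  exact (List.Perm.cons _ h).trans (List.perm_append_singleton _ _).symm

lemma eraseIdx_idxOf {u : List ℕ} (h : IsPermWord (n + 1) u) :
    IsPermWord n (u.eraseIdx (u.idxOf (n + 1))) := by
  rw [← List.erase_eq_eraseIdx_of_idxOf rfl]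
  refine (List.Perm.erase (n + 1) h).trans ?_
  rw [List.range'_1_concat, List.erase_append_right _ (by simp [add_comm]), add_comm 1 n,
    List.erase_cons_head, List.append_nil]

end IsPermWord

lemma List.ofFn_val_add_one_eq_range' (n : ℕ) :
    List.ofFn (fun i : Fin n => (i : ℕ) + 1) = List.range' 1 n := by
  apply List.ext_getElem <;> simp [add_comm]

lemma toWord_isPermWord {n : ℕ} (σ : Equiv.Perm (Fin n)) : IsPermWord n (toWord σ) := by
  rw [IsPermWord, ← List.ofFn_val_add_one_eq_range']
  exact σ.ofFn_comp_perm fun i => (i : ℕ) + 1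

lemma toWord_injective {n : ℕ} : Function.Injective (toWord (n := n)) := by
  intro σ τ h
  ext i
  simpa [toWord] using congrFun (List.ofFn_injective h) i

lemma sum_toWord {M : Type*} [AddCommMonoid M] (n : ℕ) (f : List ℕ → M) :
    ∑ σ : Equiv.Perm (Fin n), f (toWord σ) = ∑ w ∈ permWords n, f w := by
  have hmaps : Set.MapsTo toWord (univ : Finset (Equiv.Perm (Fin n))) (permWords n) :=
    fun σ _ => mem_permWords.mpr (toWord_isPermWord σ)
  have hcard : #(permWords n) ≤ #(univ : Finset (Equiv.Perm (Fin n))) := by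
    simpa [Fintype.card_perm] using card_permWords_le n
  exact sum_nbij _ hmaps toWord_injective.injOn
    (surjOn_of_injOn_of_card_le _ hmaps toWord_injective.injOn hcard) fun _ _ => rfl

lemma List.idxOf_insertIdx_of_notMem {α : Type*} [BEq α] [LawfulBEq α] {l : List α} {a : α}
    {i : ℕ} (ha : a ∉ l) (hi : i ≤ l.length) : (l.insertIdx i a).idxOf a = i := by
  induction l generalizing i with
  | nil => simp_all
  | cons b l ih =>
    rcases i with _ | i
    · simp
    · rw [List.mem_cons, not_or] at ha
      rw [List.insertIdx_succ_cons, List.idxOf_cons_ne _ fun h => ha.1 h.symm,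
        ih ha.2 (by simpa using hi)]

lemma sum_permWords_succ {M : Type*} [AddCommMonoid M] (n : ℕ) (f : List ℕ → M) :
    ∑ u ∈ permWords (n + 1), f u =
      ∑ w ∈ permWords n, ∑ j ∈ range (n + 1), f (w.insertIdx j (n + 1)) := by
  rw [← sum_product']
  symm
  refine sum_nbij' (fun p => p.1.insertIdx p.2 (n + 1))
    (fun u => (u.eraseIdx (u.idxOf (n + 1)), u.idxOf (n + 1))) ?_ ?_ ?_ ?_ fun _ _ => rfl
  · simp only [mem_product, mem_range, mem_permWords, and_imp, Prod.forall]
    exact fun w j hw hj => hw.insertIdx (Nat.lt_succ_iff.mp hj)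
  · simp only [mem_product, mem_range, mem_permWords]
    intro u hu
    exact ⟨hu.eraseIdx_idxOf, (List.idxOf_lt_length_iff.mpr (hu.mem_iff.mpr (by omega))).trans_eq hu.length_eq⟩
  · simp only [mem_product, mem_range, mem_permWords, and_imp, Prod.forall]
    intro w j hw hj
    rw [List.idxOf_insertIdx_of_notMem (by simp [hw.mem_iff]) (by rw [hw.length_eq]; omega),
      List.eraseIdx_insertIdx_self]
  · simp only [mem_permWords]
    intro u hu
    have hidx : u.idxOf (n + 1) < u.length :=
      List.idxOf_lt_length_iff.mpr (hu.mem_iff.mpr (by omega))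
    conv_rhs => rw [← List.insertIdx_eraseIdx_getElem hidx, List.getElem_idxOf hidx]

section GeneratingFunction

variable {R : Type*} [CommSemiring R] (q : R)

lemma sum_pow_permWords_eq_prod (s : List ℕ → ℕ) (hs₀ : s [] = 0)
    (hs : ∀ m w, IsPermWord m w → ∑ j ∈ range (m + 1), q ^ s (w.insertIdx j (m + 1)) =
      q ^ s w * ∑ j ∈ range (m + 1), q ^ j) (n : ℕ) :
    ∑ w ∈ permWords n, q ^ s w = ∏ k ∈ range n, ∑ j ∈ range (k + 1), q ^ j := by
  induction n with
  | zero => simp [permWords, hs₀]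
  | succ n ih =>
    rw [sum_permWords_succ, prod_range_succ, ← ih, sum_mul]
    exact sum_congr rfl fun w hw => hs n w (mem_permWords.mp hw)

lemma sum_pow_maj_permWords (n : ℕ) :
    ∑ w ∈ permWords n, q ^ maj w = ∏ k ∈ range n, ∑ j ∈ range (k + 1), q ^ j := by
  refine sum_pow_permWords_eq_prod q maj rfl (fun m w hw => ?_) n
  obtain rfl := hw.length_eq
  rw [mul_sum, ← sum_comp_majIncrement w (q ^ maj w * q ^ ·)]
  refine sum_congr rfl fun j hj => ?_
  rw [maj_insertIdx (Nat.lt_succ_iff.mp (mem_range.mp hj)) fun x hx => (hw.mem_iff.mp hx).2,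
    pow_add]

lemma sum_pow_inv_permWords (n : ℕ) :
    ∑ w ∈ permWords n, q ^ inv w = ∏ k ∈ range n, ∑ j ∈ range (k + 1), q ^ j := by
  refine sum_pow_permWords_eq_prod q inv rfl (fun m w hw => ?_) n
  obtain rfl := hw.length_eq
  rw [mul_sum, ← sum_range_reflect (q ^ inv w * q ^ ·)]
  refine sum_congr rfl fun j hj => ?_
  rw [inv_insertIdx (Nat.lt_succ_iff.mp (mem_range.mp hj)) fun x hx => (hw.mem_iff.mp hx).2,
    pow_add, Nat.add_sub_cancel]

end GeneratingFunction

theorem stmt0_general (n : ℕ) (q : ℚ) :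
    ∑ σ : Equiv.Perm (Fin n), q ^ maj (toWord σ) =
      ∑ σ : Equiv.Perm (Fin n), q ^ inv (toWord σ) := by
  rw [sum_toWord n (q ^ maj ·), sum_toWord n (q ^ inv ·), sum_pow_maj_permWords,
    sum_pow_inv_permWords]

theorem stmt0 (n : ℕ) (hn : 1 ≤ n) (q : ℚ) :
    ∑ σ : Equiv.Perm (Fin n), q ^ maj (toWord σ) =
      ∑ σ : Equiv.Perm (Fin n), q ^ inv (toWord σ) :=
  stmt0_general n q
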